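/- arXiv:2001.07850 — 7 statements merged into one kernel-verified Lean document; each statement's English description precedes it below -/
import Mathlib

section
/- For all integers n, m ≥ 2, the total 2-domination number of the Cartesian product K_n □ K_m satisfies min{n,m} + 2 ≤ γ_{2t}(K_n □ K_m) ≤ 2·min{n,m}. -/
open SimpleGraph

/-- `S` is a total 2-dominating set of `G`: every vertex has at least 2 neighbors in `S`. -/
def TotalTwoDom {V : Type*} (G : SimpleGraph V) (S : Set V) : Prop :=
  ∀ v : V, 2 ≤ (S ∩ {u | G.Adj v u}).ncard

/-- The total 2-domination number of `G`. -/
noncomputable def gamma2t {V : Type*} [Fintype V] (G : SimpleGraph V) : ℕ :=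
  sInf {k | ∃ S : Set V, TotalTwoDom G S ∧ S.ncard = k}

/-- The complete graph on `n` vertices. -/
def K (n : ℕ) : SimpleGraph (Fin n) := ⊤

/-!
Let `r a` and `c b` count the vertices of a total 2-dominating set `S` of `K_n □ K_m` in row `a`
and column `b`. The vertex `(a, b)` has at most `r a + c b - 2·[(a, b) ∈ S]` neighbours in `S`,
so `r a + c b ≥ 2` everywhere and `≥ 4` on `S`. If every row meets `S` twice, `|S| ≥ 2n`; if a
row misses `S`, every column meets it twice and `|S| ≥ 2m`; if row `a` meets `S` only in
`(a, b)`, column `b` meets it three times and every other column once, so `|S| ≥ m + 2`.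
Two full columns show `γ₂ₜ ≤ 2n`, and `K_n □ K_m ≃ K_m □ K_n` lets us assume `n ≤ m`.
-/

open Finset

namespace TotalTwoDom

variable {V W : Type*} {G : SimpleGraph V} {H : SimpleGraph W}

theorem image_iso (e : G ≃g H) {S : Set V} (hS : TotalTwoDom G S) :
    TotalTwoDom H (e '' S) := by
  intro w
  have hN : e '' {u | G.Adj (e.symm w) u} = {u | H.Adj w u} := by
    ext u
    rw [← e.apply_symm_apply u, e.injective.mem_set_image, Set.mem_ofPred_eq, Set.mem_ofPred_eq,
      e.apply_symm_apply]
    exact e.symm.map_adj_iff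
  rw [← hN, ← Set.image_inter e.injective, Set.ncard_image_of_injective _ e.injective]
  exact hS (e.symm w)

theorem coe_finset_iff [DecidableRel G.Adj] (T : Finset V) :
    TotalTwoDom G T ↔ ∀ v, 2 ≤ #{u ∈ T | G.Adj v u} := by
  refine forall_congr' fun v => ?_
  rw [← Set.ncard_coe_finset, coe_filter]
  rfl

end TotalTwoDom

section gamma2t

variable {V W : Type*} [Fintype V] [Fintype W] {G : SimpleGraph V} {H : SimpleGraph W}

theorem gamma2t_le_ncard {S : Set V} (hS : TotalTwoDom G S) : gamma2t G ≤ S.ncard :=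
  Nat.sInf_le ⟨S, hS, rfl⟩

theorem le_gamma2t {k : ℕ} (hex : ∃ S, TotalTwoDom G S)
    (hk : ∀ S, TotalTwoDom G S → k ≤ S.ncard) : k ≤ gamma2t G := by
  obtain ⟨S, hS⟩ := hex
  refine le_csInf ⟨_, S, hS, rfl⟩ ?_
  rintro _ ⟨S, hS, rfl⟩
  exact hk S hS

theorem gamma2t_congr (e : G ≃g H) : gamma2t G = gamma2t H := by
  refine congrArg sInf (Set.ext fun k => ⟨?_, ?_⟩) <;> rintro ⟨S, hS, rfl⟩
  · exact ⟨e '' S, hS.image_iso e, Set.ncard_image_of_injective _ e.injective⟩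
  · exact ⟨e.symm '' S, hS.image_iso e.symm, Set.ncard_image_of_injective _ e.symm.injective⟩

end gamma2t

section Rook

variable {α β : Type*}

variable (α β) in
def rookGraph : SimpleGraph (α × β) := (⊤ : SimpleGraph α) □ (⊤ : SimpleGraph β)

theorem rookGraph_adj {x y : α × β} :
    (rookGraph α β).Adj x y ↔ x.1 = y.1 ∧ x.2 ≠ y.2 ∨ x.2 = y.2 ∧ x.1 ≠ y.1 := by
  simp only [rookGraph, boxProd_adj, top_adj]
  tauto

instance [DecidableEq α] [DecidableEq β] : DecidableRel (rookGraph α β).Adj :=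
  fun _ _ => decidable_of_iff' _ rookGraph_adj

theorem totalTwoDom_univ_prod_pair [Finite α] [Finite β] [Nontrivial α] [DecidableEq β]
    {b₀ b₁ : β} (hb : b₀ ≠ b₁) :
    TotalTwoDom (rookGraph α β) (Set.univ ×ˢ {b₀, b₁}) := by
  rintro ⟨a, b⟩
  obtain ⟨a', ha'⟩ := exists_ne a
  set x : α × β := (if b = b₀ then a' else a, b₀)
  set y : α × β := (if b = b₁ then a' else a, b₁)
  have hx : x ∈ Set.univ ×ˢ {b₀, b₁} ∩ {u | (rookGraph α β).Adj (a, b) u} := by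
    by_cases h : b = b₀ <;> simp [x, h, rookGraph_adj, ha'.symm]
  have hy : y ∈ Set.univ ×ˢ {b₀, b₁} ∩ {u | (rookGraph α β).Adj (a, b) u} := by
    by_cases h : b = b₁ <;> simp [y, h, rookGraph_adj, ha'.symm]
  calc 2 = ({x, y} : Set (α × β)).ncard := (Set.ncard_pair (by simp [x, y, hb])).symm
    _ ≤ _ := Set.ncard_le_ncard (Set.pair_subset hx hy) (Set.toFinite _)

variable [DecidableEq α] [DecidableEq β]

theorem card_filter_adj_le (T : Finset (α × β)) (v : α × β) :
    #{u ∈ T | (rookGraph α β).Adj v u} ≤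
      #({u ∈ T | u.1 = v.1}.erase v) + #({u ∈ T | u.2 = v.2}.erase v) := by
  refine (card_le_card fun u hu => ?_).trans (card_union_le _ _)
  simp only [mem_filter, rookGraph_adj] at hu
  simp only [mem_union, mem_erase, mem_filter, ne_eq]
  grind

theorem TotalTwoDom.two_le_card_row_add_card_col {T : Finset (α × β)}
    (hT : TotalTwoDom (rookGraph α β) T) (a : α) (b : β) :
    2 ≤ #{u ∈ T | u.1 = a} + #{u ∈ T | u.2 = b} := by
  rw [TotalTwoDom.coe_finset_iff] at hT
  exact (hT (a, b)).trans <| (card_filter_adj_le T _).trans <|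
    add_le_add card_erase_le card_erase_le

theorem TotalTwoDom.four_le_card_row_add_card_col {T : Finset (α × β)}
    (hT : TotalTwoDom (rookGraph α β) T) {v : α × β} (hv : v ∈ T) :
    4 ≤ #{u ∈ T | u.1 = v.1} + #{u ∈ T | u.2 = v.2} := by
  rw [TotalTwoDom.coe_finset_iff] at hT
  have h : 2 ≤ #({u ∈ T | u.1 = v.1}.erase v) + #({u ∈ T | u.2 = v.2}.erase v) :=
    (hT v).trans (card_filter_adj_le T v)
  have h₁ := card_erase_add_one (mem_filter.2 ⟨hv, rfl⟩ : v ∈ {u ∈ T | u.1 = v.1})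
  have h₂ := card_erase_add_one (mem_filter.2 ⟨hv, rfl⟩ : v ∈ {u ∈ T | u.2 = v.2})
  omega

theorem TotalTwoDom.min_le_ncard_rookGraph [Fintype α] [Fintype β]
    (hβ : 2 ≤ Fintype.card β) {S : Set (α × β)} (hS : TotalTwoDom (rookGraph α β) S) :
    min (2 * Fintype.card α) (Fintype.card β + 2) ≤ S.ncard := by
  lift S to Finset (α × β) using S.toFinite
  rw [Set.ncard_coe_finset]
  set r : α → ℕ := fun a => #{u ∈ S | u.1 = a}
  set c : β → ℕ := fun b => #{u ∈ S | u.2 = b}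
  have hr : #S = ∑ a, r a := card_eq_sum_card_fiberwise fun _ _ => mem_univ _
  have hc : #S = ∑ b, c b := card_eq_sum_card_fiberwise fun _ _ => mem_univ _
  have hrc : ∀ a b, 2 ≤ r a + c b := hS.two_le_card_row_add_card_col
  by_cases hrows : ∀ a, 2 ≤ r a
  · have := card_nsmul_le_sum univ r 2 fun a _ => hrows a
    rw [← hr, smul_eq_mul, card_univ] at this
    omega
  push Not at hrows
  obtain ⟨a, ha⟩ := hrows
  obtain hempty | hsingle : r a = 0 ∨ r a = 1 := by omega
  · have := card_nsmul_le_sum univ c 2 fun b _ => by have := hrc a b; omega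
    rw [← hc, smul_eq_mul, card_univ] at this
    omega
  · obtain ⟨v, hv⟩ : ({u ∈ S | u.1 = a} : Finset _).Nonempty :=
      card_pos.1 (show 0 < r a by omega)
    rw [mem_filter] at hv
    have hcv : 3 ≤ c v.2 := by
      have : 4 ≤ r v.1 + c v.2 := hS.four_le_card_row_add_card_col hv.1
      rw [hv.2] at this
      omega
    have hrest := card_nsmul_le_sum (univ.erase v.2) c 1 fun b _ => by have := hrc a b; omega
    rw [card_erase_of_mem (mem_univ _), card_univ, smul_eq_mul] at hrest
    calc min (2 * Fintype.card α) (Fintype.card β + 2)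
        ≤ c v.2 + (Fintype.card β - 1) * 1 := by omega
      _ ≤ c v.2 + ∑ b ∈ univ.erase v.2, c b := by gcongr
      _ = #S := by rw [add_sum_erase _ _ (mem_univ _), hc]

end Rook

theorem stmt_0 (n m : ℕ) (hn : 2 ≤ n) (hm : 2 ≤ m) :
    min n m + 2 ≤ gamma2t (K n □ K m) ∧ gamma2t (K n □ K m) ≤ 2 * min n m := by
  wlog hnm : n ≤ m generalizing n m
  · rw [min_comm, gamma2t_congr (boxProdComm _ _)]
    exact this m n hm hn (by omega)
  have : Nontrivial (Fin n) := Fin.nontrivial_iff_two_le.2 hn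
  have hcols : TotalTwoDom (K n □ K m) (Set.univ ×ˢ {⟨0, by omega⟩, ⟨1, by omega⟩}) :=
    totalTwoDom_univ_prod_pair (by simp)
  rw [min_eq_left hnm]
  constructor
  · refine le_gamma2t ⟨_, hcols⟩ fun S hS => ?_
    have := hS.min_le_ncard_rookGraph (by simpa using hm)
    simp only [Fintype.card_fin] at this
    omega
  · refine (gamma2t_le_ncard hcols).trans_eq ?_
    rw [Set.ncard_prod, Set.ncard_univ, Set.ncard_pair (by simp), Nat.card_eq_fintype_card,
      Fintype.card_fin, mul_comm]
end

section
/- For every integer m ≥ 2, the total 2-domination number of K_2 □ K_m equals 4. -/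
open SimpleGraph

/-!
Every vertex of `K₂ □ H` has exactly one neighbour outside its own copy of `H`, so a total
2-dominating set must totally dominate each copy of `H` from inside that copy; this needs two
vertices per copy, hence at least `4` in all. Conversely two adjacent columns `K₂ × {b₀, b₁}`
total 2-dominate `K₂ □ Kₘ`.
-/

open Set Function

theorem gamma2t_eq_of_isLeast {V : Type*} [Fintype V] {G : SimpleGraph V} {k : ℕ}
    (hex : ∃ S, TotalTwoDom G S ∧ S.ncard = k)
    (hle : ∀ S, TotalTwoDom G S → k ≤ S.ncard) : gamma2t G = k :=
  IsLeast.csInf_eq ⟨hex, by rintro _ ⟨S, hS, rfl⟩; exact hle S hS⟩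

section BoxProd

variable {α β : Type*} {G : SimpleGraph α} {H : SimpleGraph β} {S : Set (α × β)}

theorem TotalTwoDom.exists_adj_mem_fiber (hS : TotalTwoDom (G □ H) S)
    (hG : ∀ a, (G.neighborSet a).Subsingleton) (a : α) (b : β) :
    ∃ b', H.Adj b b' ∧ (a, b') ∈ S := by
  have h2 := hS (a, b)
  obtain ⟨x, ⟨hxS, hx⟩, y, ⟨hyS, hy⟩, hxy⟩ :=
    (one_lt_ncard (finite_of_ncard_pos (by omega))).1 h2
  rcases boxProd_adj.1 hx with ⟨hxG, hx₂⟩ | ⟨hxH, hx₁⟩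
  · rcases boxProd_adj.1 hy with ⟨hyG, hy₂⟩ | ⟨hyH, hy₁⟩
    · exact absurd (Prod.ext (hG a hxG hyG) (hx₂.symm.trans hy₂)) hxy
    · exact ⟨y.2, hyH, by rwa [show a = y.1 from hy₁]⟩
  · exact ⟨x.2, hxH, by rwa [show a = x.1 from hx₁]⟩

theorem TotalTwoDom.two_le_ncard_fiber [Finite α] [Finite β] [Nonempty β]
    (hS : TotalTwoDom (G □ H) S) (hG : ∀ a, (G.neighborSet a).Subsingleton) (a : α) :
    2 ≤ (S ∩ Prod.fst ⁻¹' {a}).ncard := by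
  obtain ⟨b₁, -, hb₁⟩ := hS.exists_adj_mem_fiber hG a (Classical.arbitrary β)
  obtain ⟨b₂, hb₁₂, hb₂⟩ := hS.exists_adj_mem_fiber hG a b₁
  refine (one_lt_ncard (toFinite _)).2 ⟨(a, b₁), ⟨hb₁, rfl⟩, (a, b₂), ⟨hb₂, rfl⟩, ?_⟩
  simpa using hb₁₂.ne

theorem TotalTwoDom.two_mul_card_le_ncard [Finite α] [Finite β] [Nonempty β]
    (hS : TotalTwoDom (G □ H) S) (hG : ∀ a, (G.neighborSet a).Subsingleton) :
    2 * Nat.card α ≤ S.ncard := by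
  have hunion : ⋃ a, S ∩ Prod.fst ⁻¹' {a} = S := by ext; simp
  have hdisj : Pairwise (Disjoint on fun a : α ↦ S ∩ Prod.fst ⁻¹' {a}) := fun a a' h ↦
    ((disjoint_singleton.2 h).preimage _).inter_left' _ |>.inter_right' _
  have := Fintype.ofFinite α
  calc 2 * Nat.card α = ∑ _a : α, 2 := by simp [Nat.card_eq_fintype_card, mul_comm]
    _ ≤ ∑ a, (S ∩ Prod.fst ⁻¹' {a}).ncard :=
      Finset.sum_le_sum fun a _ ↦ hS.two_le_ncard_fiber hG a
    _ = S.ncard := by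
      rw [← finsum_eq_sum_of_fintype, ← ncard_iUnion_of_finite (fun _ ↦ toFinite _) hdisj, hunion]

theorem totalTwoDom_univ_prod_pair_s1 [Finite α] (hG : ∀ a, (G.neighborSet a).Nonempty)
    {b₀ b₁ : β} (hb : b₀ ≠ b₁) : TotalTwoDom (G □ ⊤) (univ ×ˢ {b₀, b₁}) := by
  rintro ⟨a, b⟩
  obtain ⟨a', ha'⟩ := hG a
  rw [mem_neighborSet] at ha'
  refine (one_lt_ncard ((finite_univ.prod (toFinite _)).inter_of_left _)).2 ?_
  rcases eq_or_ne b b₀ with rfl | hb₀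
  · exact ⟨(a, b₁), by simp [boxProd_adj, hb], (a', b), by simp [boxProd_adj, ha'],
      by simp [hb.symm]⟩
  rcases eq_or_ne b b₁ with rfl | hb₁
  · exact ⟨(a, b₀), by simp [boxProd_adj, hb₀], (a', b), by simp [boxProd_adj, ha'],
      by simp [hb₀.symm]⟩
  · exact ⟨(a, b₀), by simp [boxProd_adj, hb₀], (a, b₁), by simp [boxProd_adj, hb₁],
      by simp [hb]⟩

end BoxProd

theorem stmt_1 (m : ℕ) (hm : 2 ≤ m) : gamma2t (K 2 □ K m) = 4 := by
  have hK2_nonempty : ∀ a, ((K 2).neighborSet a).Nonempty := fun a ↦ ⟨a + 1, by simp [K]⟩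
  have hK2_subsingleton : ∀ a, ((K 2).neighborSet a).Subsingleton := fun a x hx y hy ↦ by
    simp only [K, mem_neighborSet, top_adj] at hx hy
    omega
  have : Nonempty (Fin m) := ⟨⟨0, by omega⟩⟩
  refine gamma2t_eq_of_isLeast ⟨_, totalTwoDom_univ_prod_pair_s1 hK2_nonempty
    (b₀ := ⟨0, by omega⟩) (b₁ := ⟨1, by omega⟩) (by simp [Fin.ext_iff]), ?_⟩ fun S hS ↦ ?_
  · rw [ncard_prod, ncard_univ, ncard_pair (by simp [Fin.ext_iff])]
    simp
  · simpa using hS.two_mul_card_le_ncard hK2_subsingleton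
end

section
/- For all integers 2 ≤ n ≤ m, γ_{2t}(K_n □ K_m) ≥ min{m + 2, 2n}. -/
/-!
Let `S` be a total 2-dominating set of `Kₙ □ Kₘ`, with `rₐ` points in row `a` and `c_b` in column
`b`. A vertex `v = (a, b)` has `rₐ + c_b - 2·[v ∈ S]` neighbours in `S`, so
`rₐ + c_b ≥ 2 + 2·[v ∈ S]`. Summing this along row `a` gives `2m + 2rₐ ≤ m·rₐ + |S|`. If every
row has at least two points then `|S| ≥ 2n`; otherwise some `rₐ ≤ 1`, and the row inequality gives
`|S| ≥ 2m ≥ 2n` when `rₐ = 0` and `|S| ≥ m + 2` when `rₐ = 1`.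
-/

open SimpleGraph

open Finset

instance SimpleGraph.boxProdDecidableAdj {α β : Type*} [DecidableEq α] [DecidableEq β]
    (G : SimpleGraph α) (H : SimpleGraph β) [DecidableRel G.Adj] [DecidableRel H.Adj] :
    DecidableRel (G □ H).Adj :=
  fun _ _ => decidable_of_iff' _ boxProd_adj

theorem totalTwoDom_coe_iff {V : Type*} (G : SimpleGraph V) [DecidableRel G.Adj]
    (S : Finset V) : TotalTwoDom G ↑S ↔ ∀ v, 2 ≤ #{u ∈ S | G.Adj v u} := by
  simp only [TotalTwoDom, ← Set.ncard_coe_finset, coe_filter]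
  rfl

section RookGraph

variable {α β : Type*} [DecidableEq α] [DecidableEq β] (S : Finset (α × β))

theorem card_filter_boxProd_top_adj_add (v : α × β) :
    #{u ∈ S | ((⊤ : SimpleGraph α) □ (⊤ : SimpleGraph β)).Adj v u} + 2 * (if v ∈ S then 1 else 0)
      = #{u ∈ S | u.1 = v.1} + #{u ∈ S | u.2 = v.2} := by
  have hadj : {u ∈ S | ((⊤ : SimpleGraph α) □ (⊤ : SimpleGraph β)).Adj v u}
      = {u ∈ S | u.1 = v.1 ∨ u.2 = v.2}.erase v := by
    ext u
    simp only [mem_filter, mem_erase, boxProd_adj, top_adj]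
    grind [Prod.ext_iff]
  have hinter : {u ∈ S | u.1 = v.1} ∩ {u ∈ S | u.2 = v.2} = {u ∈ S | u = v} := by
    ext u
    simp only [mem_inter, mem_filter, Prod.ext_iff]
    tauto
  rw [← card_union_add_card_inter, hinter, ← filter_or, hadj, filter_eq']
  split_ifs with hv
  · rw [← card_erase_add_one (mem_filter.2 ⟨hv, Or.inl rfl⟩), card_singleton]
  · rw [erase_eq_of_notMem (by simp [hv]), card_empty]

variable [Fintype β]

theorem sum_ite_mem_row (a : α) :
    ∑ b, (if (a, b) ∈ S then 1 else 0) = #{u ∈ S | u.1 = a} := by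
  rw [← card_filter]
  refine card_nbij' (fun b => (a, b)) Prod.snd (fun b hb => ?_) (fun u hu => ?_) (fun b _ => rfl)
    (fun u hu => ?_)
  · simpa using hb
  · simp only [coe_filter] at hu
    simpa [← hu.2] using hu.1
  · simp only [coe_filter] at hu
    exact Prod.ext hu.2.symm rfl

theorem two_mul_card_add_le_of_two_le_card_adj
    (hS : ∀ v, 2 ≤ #{u ∈ S | ((⊤ : SimpleGraph α) □ (⊤ : SimpleGraph β)).Adj v u}) (a : α) :
    2 * Fintype.card β + 2 * #{u ∈ S | u.1 = a}
      ≤ Fintype.card β * #{u ∈ S | u.1 = a} + #S := by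
  calc 2 * Fintype.card β + 2 * #{u ∈ S | u.1 = a}
      = ∑ _b : β, 2 + 2 * ∑ b, (if (a, b) ∈ S then 1 else 0) := by
        rw [sum_ite_mem_row, sum_const, card_univ, smul_eq_mul, mul_comm]
    _ ≤ ∑ b, #{u ∈ S | ((⊤ : SimpleGraph α) □ (⊤ : SimpleGraph β)).Adj (a, b) u}
          + 2 * ∑ b, (if (a, b) ∈ S then 1 else 0) := by
        gcongr with b
        exact hS (a, b)
    _ = ∑ b, (#{u ∈ S | u.1 = a} + #{u ∈ S | u.2 = b}) := by
        rw [mul_sum, ← sum_add_distrib]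
        exact sum_congr rfl fun b _ => card_filter_boxProd_top_adj_add S (a, b)
    _ = Fintype.card β * #{u ∈ S | u.1 = a} + #S := by
        rw [sum_add_distrib, sum_const, card_univ, smul_eq_mul,
          ← card_eq_sum_card_fiberwise fun u _ => mem_univ u.2]

variable [Fintype α]

theorem min_le_card_of_two_le_card_adj (hαβ : Fintype.card α ≤ Fintype.card β)
    (hS : ∀ v, 2 ≤ #{u ∈ S | ((⊤ : SimpleGraph α) □ (⊤ : SimpleGraph β)).Adj v u}) :
    min (Fintype.card β + 2) (2 * Fintype.card α) ≤ #S := by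
  by_cases hrows : ∀ a, 2 ≤ #{u ∈ S | u.1 = a}
  · calc min (Fintype.card β + 2) (2 * Fintype.card α)
        ≤ ∑ _a : α, 2 := by simp [mul_comm]
      _ ≤ ∑ a, #{u ∈ S | u.1 = a} := sum_le_sum fun a _ => hrows a
      _ = #S := (card_eq_sum_card_fiberwise fun u _ => mem_univ u.1).symm
  · obtain ⟨a, ha⟩ := not_forall.mp hrows
    have hrow := two_mul_card_add_le_of_two_le_card_adj S hS a
    interval_cases #{u ∈ S | u.1 = a} <;> omega

theorem two_le_card_univ_boxProd_top_adj (hα : 2 ≤ Fintype.card α) (hβ : 2 ≤ Fintype.card β)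
    (v : α × β) :
    2 ≤ #{u | ((⊤ : SimpleGraph α) □ (⊤ : SimpleGraph β)).Adj v u} := by
  have hrow : #{u : α × β | u.1 = v.1} = Fintype.card β := by
    rw [← univ_product_univ, filter_product_left (· = v.1)]
    simp [filter_eq']
  have hcol : #{u : α × β | u.2 = v.2} = Fintype.card α := by
    rw [← univ_product_univ, filter_product_right (· = v.2)]
    simp [filter_eq']
  have hneighbours := card_filter_boxProd_top_adj_add univ v
  simp only [mem_univ, if_true, hrow, hcol] at hneighbours
  omega

end RookGraph

theorem stmt_2 (n m : ℕ) (hn : 2 ≤ n) (hnm : n ≤ m) :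
    min (m + 2) (2 * n) ≤ gamma2t (K n □ K m) := by
  classical
  change _ ≤ gamma2t ((⊤ : SimpleGraph (Fin n)) □ (⊤ : SimpleGraph (Fin m)))
  refine le_csInf ⟨_, Set.univ, ?_, rfl⟩ ?_
  · rw [← coe_univ, totalTwoDom_coe_iff]
    exact two_le_card_univ_boxProd_top_adj (by simpa) (by simpa using hn.trans hnm)
  · rintro k ⟨S, hS, rfl⟩
    rw [← S.coe_toFinset, totalTwoDom_coe_iff] at hS
    rw [Set.ncard_eq_toFinset_card']
    simpa using min_le_card_of_two_le_card_adj S.toFinset (by simpa using hnm) hS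
end

section
/- For all integers 2 ≤ n ≤ m, γ_{2t}(K_n □ K_m) ≤ γ_{2t}(K_n □ K_{m+1}) ≤ γ_{2t}(K_n □ K_m) + 1. -/
open SimpleGraph

/-!
Adding a column: if every column of an optimal set `S` on the `a × b` board has two cells, then
`|S| ≥ 2b ≥ 2a` and two full columns of the `a × (b + 1)` board suffice. Otherwise some column
has at most one cell, which forces every row to meet `S` and some row to have two cells of `S`;
keep `S` and put one new cell of that row into the new column.

Deleting a column: remove a column `k` with the fewest cells and move each cell `(i, k)` to an
empty cell of row `i`, when there is one. Column counts stay at least the count of `k`, and a row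
loses a cell only when it becomes full, with `b ≥ 3` cells. For `b = 2`, i.e. `a = b = 2`, double
counting gives `|S| ≥ 4`, the size of the whole `2 × 2` board.
-/

open Finset

namespace RookGraph

section Counts

variable {α β : Type*} [DecidableEq α] [DecidableEq β]

def rowCount [Fintype β] (F : Finset (α × β)) (i : α) : ℕ := #{j | (i, j) ∈ F}

def colCount [Fintype α] (F : Finset (α × β)) (j : β) : ℕ := #{i | (i, j) ∈ F}

lemma card_filter_fst_eq_rowCount [Fintype β] (F : Finset (α × β)) (i : α) :
    #{u ∈ F | u.1 = i} = rowCount F i := by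
  refine card_nbij' Prod.snd (fun j => (i, j)) ?_ ?_ ?_ ?_ <;> intro u <;> aesop

lemma card_filter_snd_eq_colCount [Fintype α] (F : Finset (α × β)) (j : β) :
    #{u ∈ F | u.2 = j} = colCount F j := by
  refine card_nbij' Prod.fst (fun i => (i, j)) ?_ ?_ ?_ ?_ <;> intro u <;> aesop

lemma rowCount_mono [Fintype β] {F G : Finset (α × β)} (h : F ⊆ G) (i : α) :
    rowCount F i ≤ rowCount G i :=
  card_le_card fun j => by simpa only [mem_filter, mem_univ, true_and] using @h (i, j)

lemma colCount_mono [Fintype α] {F G : Finset (α × β)} (h : F ⊆ G) (j : β) :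
    colCount F j ≤ colCount G j :=
  card_le_card fun i => by simpa only [mem_filter, mem_univ, true_and] using @h (i, j)

lemma rowCount_insert_of_notMem [Fintype β] {F : Finset (α × β)} {i : α} {j : β}
    (h : (i, j) ∉ F) : rowCount (insert (i, j) F) i = rowCount F i + 1 := by
  rw [rowCount, rowCount, ← card_insert_of_notMem (s := {j' | (i, j') ∈ F}) (by simpa using h)]
  congr 1
  ext j'
  simp [eq_comm]

lemma colCount_pos_of_mem [Fintype α] {F : Finset (α × β)} {i : α} {j : β} (h : (i, j) ∈ F) :
    0 < colCount F j :=
  card_pos.2 ⟨i, by simpa using h⟩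

end Counts

section Board

variable {α β : Type*} [Fintype α] [Fintype β] [DecidableEq α] [DecidableEq β]

lemma card_eq_sum_rowCount (F : Finset (α × β)) : #F = ∑ i, rowCount F i := by
  simp only [← card_filter_fst_eq_rowCount]
  exact card_eq_sum_card_fiberwise fun _ _ => mem_univ _

lemma card_eq_sum_colCount (F : Finset (α × β)) : #F = ∑ j, colCount F j := by
  simp only [← card_filter_snd_eq_colCount]
  exact card_eq_sum_card_fiberwise fun _ _ => mem_univ _

lemma ncard_adj_add_ite (F : Finset (α × β)) (v : α × β) :
    (↑F ∩ {u | ((⊤ : SimpleGraph α) □ (⊤ : SimpleGraph β)).Adj v u}).ncard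
      + (if v ∈ F then 2 else 0) = rowCount F v.1 + colCount F v.2 := by
  have hadj : ↑F ∩ {u | ((⊤ : SimpleGraph α) □ (⊤ : SimpleGraph β)).Adj v u}
      = ↑({u ∈ F | u.1 = v.1}.erase v ∪ {u ∈ F | u.2 = v.2}.erase v) := by
    ext u
    simp only [coe_union, coe_erase, coe_filter, Set.mem_inter_iff, Set.mem_union, Set.mem_sdiff,
      Set.mem_ofPred_eq, Set.mem_singleton_iff, mem_coe, boxProd_adj, top_adj]
    aesop
  have hdisj : Disjoint ({u ∈ F | u.1 = v.1}.erase v) ({u ∈ F | u.2 = v.2}.erase v) := by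
    simp only [Finset.disjoint_left, mem_erase, mem_filter]
    exact fun u ⟨hne, _, h1⟩ ⟨_, _, h2⟩ => hne (Prod.ext h1 h2)
  rw [hadj, Set.ncard_coe_finset, card_union_of_disjoint hdisj, card_erase_eq_ite,
    card_erase_eq_ite, ← card_filter_fst_eq_rowCount, ← card_filter_snd_eq_colCount]
  by_cases hv : v ∈ F
  · have hv1 : v ∈ {u ∈ F | u.1 = v.1} := mem_filter.2 ⟨hv, rfl⟩
    have hv2 : v ∈ {u ∈ F | u.2 = v.2} := mem_filter.2 ⟨hv, rfl⟩
    have := card_pos.2 ⟨v, hv1⟩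
    have := card_pos.2 ⟨v, hv2⟩
    simp only [hv, hv1, hv2, if_true]
    omega
  · simp [hv]

/-- Total 2-domination in the rook's graph `K_α □ K_β`, counted along lines: a cell sees the
cells of `F` in its row and in its column, itself (twice) excepted. -/
def IsTwoDom (F : Finset (α × β)) : Prop :=
  ∀ i j, 2 + (if (i, j) ∈ F then 2 else 0) ≤ rowCount F i + colCount F j

lemma totalTwoDom_coe_iff (F : Finset (α × β)) :
    TotalTwoDom ((⊤ : SimpleGraph α) □ (⊤ : SimpleGraph β)) ↑F ↔ IsTwoDom F := by
  rw [TotalTwoDom, Prod.forall]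
  refine forall₂_congr fun i j => ?_
  have := ncard_adj_add_ite F (i, j)
  dsimp only at this
  split_ifs at this ⊢ <;> omega

namespace IsTwoDom

variable {F : Finset (α × β)}

lemma two_le (hF : IsTwoDom F) (i : α) (j : β) : 2 ≤ rowCount F i + colCount F j :=
  le_trans (Nat.le_add_right _ _) (hF i j)

lemma four_le_of_mem (hF : IsTwoDom F) {i : α} {j : β} (h : (i, j) ∈ F) :
    4 ≤ rowCount F i + colCount F j := by
  simpa [h] using hF i j

lemma card_lower_bound (hF : IsTwoDom F) :
    2 * (Fintype.card α * Fintype.card β) + 2 * #F ≤ (Fintype.card α + Fintype.card β) * #F := by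
  have hsum := sum_le_sum fun i (_ : i ∈ univ) => sum_le_sum fun j (_ : j ∈ univ) => hF i j
  have hrow : ∀ i, ∑ j, (if (i, j) ∈ F then 2 else 0) = 2 * rowCount F i := fun i => by
    simp only [rowCount, card_filter, mul_sum, mul_ite, mul_one, mul_zero]
  simp only [sum_add_distrib, hrow, sum_const, card_univ, smul_eq_mul, ← mul_sum,
    ← card_eq_sum_rowCount] at hsum
  rw [← card_eq_sum_colCount] at hsum
  linarith

end IsTwoDom

lemma isTwoDom_univ_product (hα : 2 ≤ Fintype.card α) {s : Finset β} (hs : 2 ≤ #s) :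
    IsTwoDom (univ ×ˢ s : Finset (α × β)) := by
  intro i j
  have hrow : rowCount (univ ×ˢ s : Finset (α × β)) i = #s := by simp [rowCount]
  by_cases hj : j ∈ s
  · have hcol : colCount (univ ×ˢ s : Finset (α × β)) j = Fintype.card α := by simp [colCount, hj]
    rw [if_pos (mem_product.2 ⟨mem_univ i, hj⟩), hrow, hcol]
    omega
  · rw [if_neg fun h => hj (mem_product.1 h).2, hrow]
    omega

lemma gamma2t_le_card {F : Finset (α × β)} (hF : IsTwoDom F) :
    gamma2t ((⊤ : SimpleGraph α) □ (⊤ : SimpleGraph β)) ≤ #F :=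
  Nat.sInf_le ⟨F, (totalTwoDom_coe_iff F).2 hF, Set.ncard_coe_finset F⟩

lemma exists_isTwoDom_card_eq_gamma2t (hα : 2 ≤ Fintype.card α) (hβ : 2 ≤ Fintype.card β) :
    ∃ F : Finset (α × β), IsTwoDom F ∧
      #F = gamma2t ((⊤ : SimpleGraph α) □ (⊤ : SimpleGraph β)) := by
  classical
  obtain ⟨S, hS, hcard⟩ : gamma2t ((⊤ : SimpleGraph α) □ (⊤ : SimpleGraph β)) ∈
      {k | ∃ S, TotalTwoDom ((⊤ : SimpleGraph α) □ (⊤ : SimpleGraph β)) S ∧ S.ncard = k} :=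
    Nat.sInf_mem
      ⟨_, _, (totalTwoDom_coe_iff _).2 (isTwoDom_univ_product hα (by rwa [card_univ])), rfl⟩
  refine ⟨S.toFinset, ?_, ?_⟩
  · rwa [← totalTwoDom_coe_iff, Set.coe_toFinset]
  · rw [← Set.ncard_eq_toFinset_card', hcard]

end Board

section Columns

variable {α : Type*} [Fintype α] [DecidableEq α] {b : ℕ}

def dropCol (k : Fin (b + 1)) (F : Finset (α × Fin (b + 1))) : Finset (α × Fin b) :=
  {p | (p.1, k.succAbove p.2) ∈ F}

@[simp]
lemma mem_dropCol (k : Fin (b + 1)) (F : Finset (α × Fin (b + 1))) {p : α × Fin b} :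
    p ∈ dropCol k F ↔ (p.1, k.succAbove p.2) ∈ F := by
  simp [dropCol]

lemma rowCount_dropCol_add (k : Fin (b + 1)) (F : Finset (α × Fin (b + 1))) (i : α) :
    rowCount (dropCol k F) i + (if (i, k) ∈ F then 1 else 0) = rowCount F i := by
  simp only [rowCount, card_filter, Fin.sum_univ_succAbove _ k, mem_dropCol]
  omega

lemma colCount_dropCol (k : Fin (b + 1)) (F : Finset (α × Fin (b + 1))) (j : Fin b) :
    colCount (dropCol k F) j = colCount F (k.succAbove j) := by
  simp only [colCount, mem_dropCol]

lemma card_dropCol_add (k : Fin (b + 1)) (F : Finset (α × Fin (b + 1))) :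
    #(dropCol k F) + colCount F k = #F := by
  rw [card_eq_sum_colCount F, Fin.sum_univ_succAbove _ k, card_eq_sum_colCount]
  simp only [colCount_dropCol]
  omega

lemma isTwoDom_of_dropCol {k : Fin (b + 1)} {F : Finset (α × Fin (b + 1))}
    (hF : IsTwoDom (dropCol k F))
    (hk : ∀ i, 2 + (if (i, k) ∈ F then 2 else 0) ≤ rowCount F i + colCount F k) :
    IsTwoDom F := by
  intro i j
  induction j using Fin.succAboveCases k with
  | x => exact hk i
  | p j =>
    have hrow := rowCount_dropCol_add k F i
    have := hF i j
    simp only [colCount_dropCol, mem_dropCol] at this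
    split_ifs at * <;> omega

lemma exists_isTwoDom_succ_card_le_of_rowCount {F : Finset (α × Fin b)} (hF : IsTwoDom F)
    (k : Fin (b + 1)) {i₀ : α} (hpos : ∀ i, 1 ≤ rowCount F i) (hi₀ : 2 ≤ rowCount F i₀) :
    ∃ T : Finset (α × Fin (b + 1)), IsTwoDom T ∧ #T ≤ #F + 1 := by
  set T := insert (i₀, k) (F.map ((Function.Embedding.refl α).prodMap k.succAboveEmb))
  have hmem : ∀ i j, (i, k.succAbove j) ∈ T ↔ (i, j) ∈ F := by
    simp [T, Fin.succAbove_ne]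
  have hmemk : ∀ i, (i, k) ∈ T ↔ i = i₀ := by
    simp [T, Fin.succAbove_ne]
  have hdrop : dropCol k T = F := by ext p; simp [hmem]
  have hcol : colCount T k = 1 := by simp [colCount, hmemk, filter_eq']
  refine ⟨T, isTwoDom_of_dropCol (hdrop ▸ hF) fun i => ?_, ?_⟩
  · have hrow := rowCount_dropCol_add k T i
    rw [hdrop] at hrow
    simp only [hmemk, hcol] at hrow ⊢
    have := hpos i
    split_ifs at hrow ⊢ with hi
    · subst hi
      omega
    · omega
  · exact (card_insert_le _ _).trans (by rw [card_map])

def moveCol (k : Fin (b + 1)) (f : α → Fin b) (F : Finset (α × Fin (b + 1))) :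
    Finset (α × Fin b) :=
  dropCol k F ∪ image (fun i => (i, f i)) {i | (i, k) ∈ F}

lemma mem_moveCol {k : Fin (b + 1)} {f : α → Fin b} {F : Finset (α × Fin (b + 1))} {i : α}
    {j : Fin b} : (i, j) ∈ moveCol k f F ↔ (i, k.succAbove j) ∈ F ∨ (i, k) ∈ F ∧ f i = j := by
  simp [moveCol]

lemma card_moveCol_le (k : Fin (b + 1)) (f : α → Fin b) (F : Finset (α × Fin (b + 1))) :
    #(moveCol k f F) ≤ #F :=
  calc #(moveCol k f F) ≤ #(dropCol k F) + #(image (fun i => (i, f i)) {i | (i, k) ∈ F}) :=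
        card_union_le _ _
    _ ≤ #(dropCol k F) + colCount F k := by gcongr; exact card_image_le
    _ = #F := card_dropCol_add k F

lemma rowCount_le_rowCount_moveCol {k : Fin (b + 1)} {f : α → Fin b}
    {F : Finset (α × Fin (b + 1))} {i : α} (hfree : (i, f i) ∉ dropCol k F) :
    rowCount F i ≤ rowCount (moveCol k f F) i := by
  have hsub : dropCol k F ⊆ moveCol k f F := subset_union_left
  have h := rowCount_dropCol_add k F i
  split_ifs at h with hik
  · have hins : insert (i, f i) (dropCol k F) ⊆ moveCol k f F :=
      insert_subset (mem_moveCol.2 (Or.inr ⟨hik, rfl⟩)) hsub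
    have := rowCount_mono hins i
    rw [rowCount_insert_of_notMem hfree] at this
    omega
  · exact h ▸ rowCount_mono hsub i

lemma isTwoDom_moveCol (hb : 3 ≤ b) {k : Fin (b + 1)} {f : α → Fin b}
    {F : Finset (α × Fin (b + 1))} (hF : IsTwoDom F) (hk : ∀ j, colCount F k ≤ colCount F j)
    (hf : ∀ i, (∀ j, (i, j) ∈ dropCol k F) ∨ (i, f i) ∉ dropCol k F) :
    IsTwoDom (moveCol k f F) := by
  have hsub : dropCol k F ⊆ moveCol k f F := subset_union_left
  have hcol : ∀ j, colCount F (k.succAbove j) ≤ colCount (moveCol k f F) j := fun j =>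
    colCount_dropCol k F j ▸ colCount_mono hsub j
  intro i j
  rcases hf i with hfull | hfree
  · have hrow : b ≤ rowCount (moveCol k f F) i := by
      have : rowCount (dropCol k F) i = b := by simp [rowCount, hfull]
      exact this.symm.le.trans (rowCount_mono hsub i)
    have hmem : (i, j) ∈ moveCol k f F := hsub (hfull j)
    have := colCount_pos_of_mem hmem
    rw [if_pos hmem]
    omega
  · have hrow := rowCount_le_rowCount_moveCol hfree
    have := hcol j
    by_cases hmem : (i, j) ∈ moveCol k f F
    · rw [if_pos hmem]
      rcases mem_moveCol.1 hmem with h | ⟨h, -⟩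
      · have := hF.four_le_of_mem h
        omega
      · have := hF.four_le_of_mem h
        have := hk (k.succAbove j)
        omega
    · have hnot : (i, k.succAbove j) ∉ F := fun h => hmem (hsub ((mem_dropCol k F).2 h))
      have := hF i (k.succAbove j)
      rw [if_neg hnot] at this
      rw [if_neg hmem]
      omega

lemma exists_isTwoDom_card_le_of_succ (hα : 2 ≤ Fintype.card α) (hαb : Fintype.card α ≤ b)
    {F : Finset (α × Fin (b + 1))} (hF : IsTwoDom F) :
    ∃ T : Finset (α × Fin b), IsTwoDom T ∧ #T ≤ #F := by
  rcases (show b = 2 ∨ 3 ≤ b by omega) with rfl | hb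
  · have hα2 : Fintype.card α = 2 := by omega
    have := hF.card_lower_bound
    rw [hα2, Fintype.card_fin] at this
    refine ⟨univ ×ˢ univ, isTwoDom_univ_product hα (by simp), ?_⟩
    rw [card_product, card_univ, card_univ, hα2, Fintype.card_fin]
    omega
  · obtain ⟨k, -, hk⟩ := exists_min_image univ (colCount F) univ_nonempty
    have : ∀ i, ∃ j, (∀ j', (i, j') ∈ dropCol k F) ∨ (i, j) ∉ dropCol k F := by
      intro i
      by_cases h : ∀ j', (i, j') ∈ dropCol k F
      · exact ⟨⟨0, by omega⟩, Or.inl h⟩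
      · obtain ⟨j, hj⟩ := not_forall.1 h
        exact ⟨j, Or.inr hj⟩
    choose f hf using this
    exact ⟨moveCol k f F, isTwoDom_moveCol hb hF (fun j => hk j (mem_univ j)) hf,
      card_moveCol_le k f F⟩

lemma exists_isTwoDom_succ_card_le (hα : 2 ≤ Fintype.card α) (hαb : Fintype.card α ≤ b)
    {F : Finset (α × Fin b)} (hF : IsTwoDom F) :
    ∃ T : Finset (α × Fin (b + 1)), IsTwoDom T ∧ #T ≤ #F + 1 := by
  by_cases hcol : ∀ j, 2 ≤ colCount F j
  · have hF2 : 2 * b ≤ #F := by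
      have := sum_le_sum fun j (_ : j ∈ univ) => hcol j
      rw [← card_eq_sum_colCount, sum_const, card_univ, Fintype.card_fin, smul_eq_mul] at this
      omega
    have h0 : (0 : Fin (b + 1)) ≠ Fin.last b := by
      rw [Ne, Fin.ext_iff, Fin.val_zero, Fin.val_last]
      omega
    refine ⟨univ ×ˢ {0, Fin.last b}, isTwoDom_univ_product hα (card_pair h0).ge, ?_⟩
    rw [card_product, card_univ, card_pair h0]
    omega
  · obtain ⟨j, hj⟩ := not_forall.1 hcol
    have hpos : ∀ i, 1 ≤ rowCount F i := fun i => by have := hF.two_le i j; omega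
    obtain ⟨i₀, hi₀⟩ : ∃ i₀, 2 ≤ rowCount F i₀ := by
      by_cases h : ∃ i, (i, j) ∈ F
      · obtain ⟨i, hi⟩ := h
        exact ⟨i, by have := hF.four_le_of_mem hi; omega⟩
      · have : colCount F j = 0 :=
          card_eq_zero.2 (filter_eq_empty_iff.2 fun i _ => not_exists.1 h i)
        obtain ⟨i⟩ : Nonempty α := Fintype.card_pos_iff.1 (by omega)
        exact ⟨i, by have := hF.two_le i j; omega⟩
    exact exists_isTwoDom_succ_card_le_of_rowCount hF (Fin.last b) hpos hi₀

end Columns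

end RookGraph

open RookGraph

theorem stmt_4 (n m : ℕ) (hn : 2 ≤ n) (hnm : n ≤ m) :
    gamma2t (K n □ K m) ≤ gamma2t (K n □ K (m + 1)) ∧
    gamma2t (K n □ K (m + 1)) ≤ gamma2t (K n □ K m) + 1 := by
  have hn' : 2 ≤ Fintype.card (Fin n) := by simpa using hn
  have hnm' : Fintype.card (Fin n) ≤ m := by simpa using hnm
  constructor
  · obtain ⟨F, hF, hFγ⟩ := exists_isTwoDom_card_eq_gamma2t (β := Fin (m + 1)) hn'
      (by rw [Fintype.card_fin]; omega)
    obtain ⟨T, hT, hTF⟩ := exists_isTwoDom_card_le_of_succ hn' hnm' hF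
    exact (gamma2t_le_card hT).trans (hTF.trans hFγ.le)
  · obtain ⟨F, hF, hFγ⟩ := exists_isTwoDom_card_eq_gamma2t (β := Fin m) hn'
      (by rw [Fintype.card_fin]; omega)
    obtain ⟨T, hT, hTF⟩ := exists_isTwoDom_succ_card_le hn' hnm' hF
    exact (gamma2t_le_card hT).trans (hFγ ▸ hTF)
end

section
/- Let n, m ≥ 2 and suppose S is a total 2-dominating set of K_n □ K_m with |S| < 2·min{n,m}. Then there exists a row v ∈ V(K_n) with |S ∩ ({v} × V(K_m))| ≥ 3, and there exists a column w ∈ V(K_m) with |S ∩ (V(K_n) × {w})| ≥ 3. -/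
open SimpleGraph

/-
The neighbours of `(a, b)` in `G □ H` lie in row `a` or in column `b`, so a total 2-dominating
set `S` has at least two elements in row `a` and column `b` together, apart from `(a, b)` itself.
If some column misses `S`, every row then holds two elements of `S`, so `|S| ≥ 2|V(G)|`. Hence
every column meets `S`, say in `(a, b)`; if no row held three elements of `S`, row `a` would hold
at most one besides `(a, b)`, so column `b` would hold another one, and `|S| ≥ 2|V(H)|`.
Columns follow from rows by swapping the factors.
-/

variable {α β : Type*}

lemma Set.ncard_preimage_of_bijective {f : α → β} (hf : f.Bijective) (T : Set β) :
    (f ⁻¹' T).ncard = T.ncard :=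
  Set.ncard_preimage_of_injective_subset_range hf.injective (by simp [hf.surjective.range_eq])

lemma Set.sum_ncard_inter_fiber [Fintype β] {S : Set α} (hS : S.Finite) (f : α → β) :
    ∑ b, (S ∩ {x | f x = b}).ncard = S.ncard := by
  classical
  lift S to Finset α using hS
  have hfiber : ∀ b, (↑S ∩ {x | f x = b} : Set α) = ↑(S.filter (f · = b)) := fun b => by
    ext; simp
  simp_rw [hfiber, Set.ncard_coe_finset]
  exact (Finset.card_eq_sum_card_fiberwise fun x _ => Finset.mem_univ (f x)).symm

lemma Set.card_mul_le_ncard_of_le_ncard_inter_fiber [Fintype β] {S : Set α} (hS : S.Finite)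
    (f : α → β) {k : ℕ} (hk : ∀ b, k ≤ (S ∩ {x | f x = b}).ncard) :
    Fintype.card β * k ≤ S.ncard := by
  rw [← Set.sum_ncard_inter_fiber hS f, ← smul_eq_mul, ← Finset.card_univ]
  exact Finset.card_nsmul_le_sum _ _ _ fun b _ => hk b

namespace TotalTwoDom

variable {γ : Type*} {G : SimpleGraph α} {H : SimpleGraph β}

lemma comap {G' : SimpleGraph γ} (e : G' ≃g G) {S : Set α} (hS : TotalTwoDom G S) :
    TotalTwoDom G' (e ⁻¹' S) := fun v => by
  simpa [← Set.ncard_preimage_of_bijective e.bijective, e.map_adj_iff] using hS (e v)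

lemma two_le_ncard_row_sdiff_add_ncard_col_sdiff {S : Set (α × β)} (hS : TotalTwoDom (G □ H) S)
    [Finite α] [Finite β] (a : α) (b : β) :
    2 ≤ ((S ∩ {p | p.1 = a}) \ {(a, b)}).ncard + ((S ∩ {p | p.2 = b}) \ {(a, b)}).ncard := by
  refine (hS (a, b)).trans <| (Set.ncard_le_ncard ?_ (Set.toFinite _)).trans
    (Set.ncard_union_le _ _)
  rintro ⟨a', b'⟩ ⟨hp, hadj⟩
  rcases boxProd_adj.1 hadj with ⟨hab, rfl⟩ | ⟨hab, rfl⟩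
  · exact Or.inr ⟨⟨hp, rfl⟩, fun h => hab.ne (Prod.ext_iff.1 h).1.symm⟩
  · exact Or.inl ⟨⟨hp, rfl⟩, fun h => hab.ne (Prod.ext_iff.1 h).2.symm⟩

variable [Fintype α] [Fintype β] {S : Set (α × β)}

lemma exists_mem_col (hS : TotalTwoDom (G □ H) S) (hcard : S.ncard < 2 * Fintype.card α)
    (b : β) : ∃ a, (a, b) ∈ S := by
  by_contra! hcol
  have hrow : ∀ a, 2 ≤ (S ∩ {p | p.1 = a}).ncard := fun a => by
    have hempty : S ∩ {p | p.2 = b} = ∅ :=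
      Set.eq_empty_of_forall_notMem fun p ⟨hp, hpb⟩ => hcol p.1 (hpb ▸ hp)
    simpa [hempty] using (hS.two_le_ncard_row_sdiff_add_ncard_col_sdiff a b).trans
      (Nat.add_le_add_right (Set.ncard_le_ncard Set.sdiff_subset (Set.toFinite _)) _)
  have := Set.card_mul_le_ncard_of_le_ncard_inter_fiber S.toFinite Prod.fst hrow
  omega

lemma exists_three_le_ncard_row (hS : TotalTwoDom (G □ H) S)
    (hα : S.ncard < 2 * Fintype.card α) (hβ : S.ncard < 2 * Fintype.card β) :
    ∃ a, 3 ≤ (S ∩ {p | p.1 = a}).ncard := by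
  by_contra! hrow
  have hcol : ∀ b, 2 ≤ (S ∩ {p | p.2 = b}).ncard := fun b => by
    obtain ⟨a, hab⟩ := hS.exists_mem_col hα b
    have hkey := hS.two_le_ncard_row_sdiff_add_ncard_col_sdiff a b
    have hr := Set.ncard_sdiff_singleton_add_one (s := S ∩ {p | p.1 = a}) ⟨hab, rfl⟩
    have hc := Set.ncard_sdiff_singleton_add_one (s := S ∩ {p | p.2 = b}) ⟨hab, rfl⟩
    have := hrow a
    omega
  have := Set.card_mul_le_ncard_of_le_ncard_inter_fiber S.toFinite Prod.snd hcol
  omega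

lemma exists_three_le_ncard_col (hS : TotalTwoDom (G □ H) S)
    (hα : S.ncard < 2 * Fintype.card α) (hβ : S.ncard < 2 * Fintype.card β) :
    ∃ b, 3 ≤ (S ∩ {p | p.2 = b}).ncard := by
  have hswap := Set.ncard_preimage_of_bijective (boxProdComm H G).bijective
  obtain ⟨b, hb⟩ := (hS.comap (boxProdComm H G)).exists_three_le_ncard_row
    (hswap S ▸ hβ) (hswap S ▸ hα)
  exact ⟨b, hswap (S ∩ {p | p.2 = b}) ▸ hb⟩

end TotalTwoDom

theorem stmt_7_general (n m : ℕ)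
    (S : Set (Fin n × Fin m)) (hS : TotalTwoDom (K n □ K m) S)
    (hcard : S.ncard < 2 * min n m) :
    (∃ v : Fin n, 3 ≤ (S ∩ {p | p.1 = v}).ncard) ∧
    (∃ w : Fin m, 3 ≤ (S ∩ {p | p.2 = w}).ncard) := by
  have hn : S.ncard < 2 * Fintype.card (Fin n) := by rw [Fintype.card_fin]; omega
  have hm : S.ncard < 2 * Fintype.card (Fin m) := by rw [Fintype.card_fin]; omega
  exact ⟨hS.exists_three_le_ncard_row hn hm, hS.exists_three_le_ncard_col hn hm⟩

theorem stmt_7 (n m : ℕ) (hn : 2 ≤ n) (hm : 2 ≤ m)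
    (S : Set (Fin n × Fin m)) (hS : TotalTwoDom (K n □ K m) S)
    (hcard : S.ncard < 2 * min n m) :
    (∃ v : Fin n, 3 ≤ (S ∩ {p | p.1 = v}).ncard) ∧
    (∃ w : Fin m, 3 ≤ (S ∩ {p | p.2 = w}).ncard) :=
  stmt_7_general n m S hS hcard
end

section
/- γ_{2t}(K_6 □ K_6) = 10. -/
open SimpleGraph

/-!
Write `r a` and `c b` for the numbers of points of `T` in row `a` and in column `b`. In the rook's
graph a vertex `v` has `r v.1 + c v.2 - 2 [v ∈ T]` neighbours in `T`, so `T` is total 2-dominating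
iff `r a + c b ≥ 2` everywhere and `r a + c b ≥ 4` on `T`.

Suppose `|T| ≤ 9`. An empty row would force all six column counts to be at least 2, so every row
and every column meets `T`. Six positive row counts with sum at most 9 leave fewer points in rows of
count `≥ 3` than there are rows of count 1. The single point of a column of count 1 must lie in a
row of count `≥ 3`, so there are fewer columns of count 1 than rows of count 1; by symmetry also
the reverse, a contradiction. Three blocks of sizes `1 × 3`, `2 × 2`, `3 × 1` give ten points.
-/

open Finset

lemma sum_filter_three_le_lt_card_filter_eq_one {ι : Type*} [Fintype ι] (r : ι → ℕ)
    (hr : ∀ i, 1 ≤ r i) (e : ℕ) (hsum : ∑ i, r i ≤ Fintype.card ι + e)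
    (he : e + 2 * (e / 2) < Fintype.card ι) :
    ∑ i with 3 ≤ r i, r i < #{i | r i = 1} := by
  -- `[r = 1] + r + 2 [3 ≤ r] = 2 + [3 ≤ r] r`, and at most `e / 2` indices have `3 ≤ r i`.
  have hid : ∑ i, ((if r i = 1 then 1 else 0) + r i + 2 * (if 3 ≤ r i then 1 else 0)) =
      ∑ i, (2 + if 3 ≤ r i then r i else 0) :=
    sum_congr rfl fun i _ => by have := hr i; split_ifs <;> omega
  have hle : ∑ i, (1 + 2 * (if 3 ≤ r i then 1 else 0)) ≤ ∑ i, r i :=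
    sum_le_sum fun i _ => by have := hr i; split_ifs <;> omega
  simp only [sum_add_distrib, ← mul_sum, ← sum_filter, sum_const, card_univ,
    smul_eq_mul] at hid hle
  omega

section RookGraph

variable {α β : Type*}

abbrev transpose (T : Finset (α × β)) : Finset (β × α) :=
  T.map (Equiv.prodComm α β).toEmbedding

lemma mem_transpose {T : Finset (α × β)} {v : β × α} : v ∈ transpose T ↔ v.swap ∈ T := by
  simp [transpose]

def rowCount [DecidableEq α] (T : Finset (α × β)) (a : α) : ℕ := #{v ∈ T | v.1 = a}

lemma card_filter_fst [DecidableEq α] [Fintype α] (T : Finset (α × β)) (p : α → Prop)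
    [DecidablePred p] :
    #{v ∈ T | p v.1} = ∑ a with p a, rowCount T a := by
  rw [card_eq_sum_card_fiberwise (f := Prod.fst) (t := {a | p a}) fun v hv => by simp_all]
  refine sum_congr rfl fun a ha => ?_
  rw [rowCount, filter_filter]
  congr 1
  refine filter_congr fun v _ => ?_
  simp only [mem_filter, mem_univ, true_and] at ha
  constructor
  · exact And.right
  · rintro rfl; exact ⟨ha, rfl⟩

def colCount [DecidableEq β] (T : Finset (α × β)) (b : β) : ℕ := #{v ∈ T | v.2 = b}

lemma ncard_adj_add_ite [DecidableEq α] [DecidableEq β] (T : Finset (α × β)) (v : α × β) :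
    ((T : Set (α × β)) ∩ {u | ((⊤ : SimpleGraph α) □ (⊤ : SimpleGraph β)).Adj v u}).ncard
      + (if v ∈ T then 2 else 0) = rowCount T v.1 + colCount T v.2 := by
  classical
  have hfilter : (T : Set (α × β)) ∩ {u | ((⊤ : SimpleGraph α) □ (⊤ : SimpleGraph β)).Adj v u} =
      ↑{u ∈ T | ((⊤ : SimpleGraph α) □ (⊤ : SimpleGraph β)).Adj v u} := by
    ext; simp
  rw [hfilter, Set.ncard_coe_finset, ← sum_ite_eq' T v (fun _ => 2), card_filter,
    rowCount, colCount, card_filter, card_filter, ← sum_add_distrib, ← sum_add_distrib]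
  refine sum_congr rfl fun u _ => ?_
  obtain ⟨a, b⟩ := v
  obtain ⟨a', b'⟩ := u
  simp only [boxProd_adj, top_adj, Prod.mk.injEq]
  by_cases ha : a = a' <;> by_cases hb : b = b' <;> simp [ha, hb, eq_comm]

lemma totalTwoDom_top_boxProd_top_iff [DecidableEq α] [DecidableEq β] (T : Finset (α × β)) :
    TotalTwoDom ((⊤ : SimpleGraph α) □ (⊤ : SimpleGraph β)) T ↔
      ∀ v, 2 + (if v ∈ T then 2 else 0) ≤ rowCount T v.1 + colCount T v.2 := by
  refine forall_congr' fun v => ?_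
  rw [← ncard_adj_add_ite]
  omega

lemma rowCount_transpose [DecidableEq β] (T : Finset (α × β)) :
    rowCount (transpose T) = colCount T := by
  ext b
  simp only [rowCount, colCount, filter_map, card_map]
  rfl

lemma colCount_transpose [DecidableEq α] (T : Finset (α × β)) :
    colCount (transpose T) = rowCount T := by
  ext a
  simp only [rowCount, colCount, filter_map, card_map]
  rfl

lemma card_filter_snd [DecidableEq β] [Fintype β] (T : Finset (α × β)) (p : β → Prop)
    [DecidablePred p] :
    #{v ∈ T | p v.2} = ∑ b with p b, colCount T b := by
  rw [← rowCount_transpose, ← card_filter_fst, transpose, filter_map, card_map]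
  rfl

lemma sum_rowCount [DecidableEq α] [Fintype α] (T : Finset (α × β)) :
    ∑ a, rowCount T a = #T := by
  simpa using (card_filter_fst T fun _ => True).symm

lemma sum_colCount [DecidableEq β] [Fintype β] (T : Finset (α × β)) :
    ∑ b, colCount T b = #T := by
  simpa using (card_filter_snd T fun _ => True).symm

lemma one_le_rowCount [DecidableEq α] [DecidableEq β] [Fintype β] {T : Finset (α × β)}
    (h : ∀ a b, 2 ≤ rowCount T a + colCount T b) (hT : #T < 2 * Fintype.card β) (a : α) :
    1 ≤ rowCount T a := by
  by_contra! ha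
  have : ∑ _b : β, 2 ≤ ∑ b, colCount T b := sum_le_sum fun b _ => by have := h a b; omega
  simp only [sum_const, card_univ, smul_eq_mul, sum_colCount] at this
  omega

lemma card_colCount_eq_one_le [DecidableEq α] [DecidableEq β] [Fintype α] [Fintype β]
    {T : Finset (α × β)}
    (h : ∀ v ∈ T, 4 ≤ rowCount T v.1 + colCount T v.2) :
    #{b | colCount T b = 1} ≤ ∑ a with 3 ≤ rowCount T a, rowCount T a := by
  calc #{b | colCount T b = 1}
      = ∑ b with colCount T b = 1, colCount T b := by
        rw [card_eq_sum_ones]; exact sum_congr rfl fun b hb => (mem_filter.mp hb).2.symm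
    _ = #{v ∈ T | colCount T v.2 = 1} := (card_filter_snd T _).symm
    _ ≤ #{v ∈ T | 3 ≤ rowCount T v.1} :=
        card_le_card <| monotone_filter_right _ fun v hv hc => by have := h v hv; omega
    _ = ∑ a with 3 ≤ rowCount T a, rowCount T a := card_filter_fst T (3 ≤ rowCount T ·)

end RookGraph

lemma ten_le_card_of_totalTwoDom (T : Finset (Fin 6 × Fin 6))
    (hT : TotalTwoDom (K 6 □ K 6) T) : 10 ≤ #T := by
  rw [K, totalTwoDom_top_boxProd_top_iff] at hT
  by_contra! hlt
  have hpair : ∀ a b, 2 ≤ rowCount T a + colCount T b := fun a b => by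
    have := hT (a, b); dsimp only at this; split_ifs at this <;> omega
  have hmem : ∀ v ∈ T, 4 ≤ rowCount T v.1 + colCount T v.2 := fun v hv => by
    simpa [hv] using hT v
  have hpair' : ∀ b a, 2 ≤ rowCount (transpose T) b + colCount (transpose T) a := by
    simpa [rowCount_transpose, colCount_transpose, add_comm] using fun b a => hpair a b
  have hmem' : ∀ v ∈ transpose T, 4 ≤ rowCount (transpose T) v.1 + colCount (transpose T) v.2 := by
    intro v hv
    simpa [rowCount_transpose, colCount_transpose, add_comm] using hmem _ (mem_transpose.mp hv)
  have hrow := one_le_rowCount hpair (by simp; omega)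
  have hcol : ∀ b, 1 ≤ colCount T b := by
    simpa [rowCount_transpose] using one_le_rowCount hpair' (by simp; omega)
  have hrows := sum_filter_three_le_lt_card_filter_eq_one (rowCount T) hrow 3
    (by simp [sum_rowCount]; omega) (by simp)
  have hcols := sum_filter_three_le_lt_card_filter_eq_one (colCount T) hcol 3
    (by simp [sum_colCount]; omega) (by simp)
  have hcross := card_colCount_eq_one_le hmem
  have hcross' := card_colCount_eq_one_le hmem'
  rw [rowCount_transpose, colCount_transpose] at hcross'
  omega

def blockSet : Finset (Fin 6 × Fin 6) :=
  {(0, 3), (0, 4), (0, 5), (1, 1), (1, 2), (2, 1), (2, 2), (3, 0), (4, 0), (5, 0)}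

lemma totalTwoDom_blockSet : TotalTwoDom (K 6 □ K 6) blockSet := by
  rw [K, totalTwoDom_top_boxProd_top_iff]
  decide

theorem stmt_12 : gamma2t (K 6 □ K 6) = 10 := by
  have h10 : 10 ∈ {k | ∃ S : Set (Fin 6 × Fin 6), TotalTwoDom (K 6 □ K 6) S ∧ S.ncard = k} :=
    ⟨blockSet, totalTwoDom_blockSet, by rw [Set.ncard_coe_finset]; rfl⟩
  refine le_antisymm (Nat.sInf_le h10) (le_csInf ⟨10, h10⟩ ?_)
  rintro k ⟨S, hS, rfl⟩
  lift S to Finset (Fin 6 × Fin 6) using S.toFinite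
  rw [Set.ncard_coe_finset]
  exact ten_le_card_of_totalTwoDom S hS
end

section
/- For every integer n ≥ 2, γ_{2t}(K_n □ K_n) equals 3n/2 if n ≡ 0 (mod 4), equals (3n+1)/2 if n is odd, and equals (3n+2)/2 if n ≡ 2 (mod 4). -/
/-!
Write `r i` and `c j` for the numbers of points of `S` in row `i` and column `j`. The vertex
`(i, j)` has `r i + c j - 2 [(i, j) ∈ S]` neighbours in `S`, so `S` is total 2-dominating iff
`r i + c j ≥ 2` off `S` and `r i + c j ≥ 4` on `S`.

Lower bound. If some line is empty, every perpendicular line carries two points and `|S| ≥ 2n`.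
Otherwise let `a` (resp. `b`) count the points alone in their row (resp. column). No point is
alone in both, so `a + b ≤ |S|`; a point alone in its column lies in a row with at least three
points, so summing `3 r ≥ 6 - 3 [r = 1] + r [r ≥ 3]` over the rows gives `3|S| ≥ 6n - 3a + b`,
and symmetrically `3|S| ≥ 6n - 3b + a`. Hence `2|S| ≥ 3n`, and equality would force `a = b`
and `|S| = a + b` even, which is impossible when `n ≡ 2 (mod 4)`.

Upper bound. Along the diagonal, put `4 × 4` blocks carrying the adjacency pattern of the star
`K_{1,3}` (six points each), and one last block of size 2, 3, 4 or 5 carrying the full square,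
a cross, or a star. Cells outside the blocks are covered because every line meets `S`.
-/

open SimpleGraph

open Finset

lemma gamma2t_le {V : Type*} [Fintype V] {G : SimpleGraph V} {S : Set V} (hS : TotalTwoDom G S) :
    gamma2t G ≤ S.ncard :=
  Nat.sInf_le ⟨S, hS, rfl⟩

lemma exists_totalTwoDom_ncard_eq_gamma2t {V : Type*} [Fintype V] {G : SimpleGraph V}
    (h : ∃ S, TotalTwoDom G S) : ∃ S, TotalTwoDom G S ∧ S.ncard = gamma2t G := by
  obtain ⟨S, hS⟩ := h
  exact Nat.sInf_mem (s := {k | ∃ S : Set V, TotalTwoDom G S ∧ S.ncard = k}) ⟨_, S, hS, rfl⟩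

section Fiber

variable {γ ι : Type*} [DecidableEq ι] [Fintype ι] (T : Finset γ) (f : γ → ι)

lemma card_eq_sum_fiber_card : #T = ∑ i, #{p ∈ T | f p = i} :=
  card_eq_sum_card_fiberwise fun _ _ => mem_coe.2 (mem_univ _)

lemma card_filter_fiber_card (P : ℕ → Prop) [DecidablePred P] :
    #{p ∈ T | P #{q ∈ T | f q = f p}} =
      ∑ i, if P #{q ∈ T | f q = i} then #{q ∈ T | f q = i} else 0 := by
  rw [card_eq_sum_fiber_card _ f]
  refine sum_congr rfl fun i _ => ?_
  rw [filter_filter]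
  split_ifs with h
  · congr 1
    refine filter_congr fun p _ => ?_
    constructor
    · exact fun hp => hp.2
    · rintro rfl; exact ⟨h, rfl⟩
  · refine card_eq_zero.2 (filter_eq_empty_iff.2 fun p _ => ?_)
    rintro ⟨hp, rfl⟩
    exact h hp

lemma two_mul_card_le_card_of_two_le (hf : ∀ i, 2 ≤ #{p ∈ T | f p = i}) :
    2 * Fintype.card ι ≤ #T := by
  rw [card_eq_sum_fiber_card T f, ← card_univ, mul_comm, ← smul_eq_mul, ← sum_const]
  exact sum_le_sum fun i _ => hf i

lemma six_mul_card_add_card_filter_le (hf : ∀ i, 0 < #{p ∈ T | f p = i}) :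
    6 * Fintype.card ι + #{p ∈ T | 3 ≤ #{q ∈ T | f q = f p}} ≤
      3 * #T + 3 * #{p ∈ T | #{q ∈ T | f q = f p} = 1} := by
  set r : ι → ℕ := fun i => #{q ∈ T | f q = i}
  have key (i : ι) :
      6 + (if 3 ≤ r i then r i else 0) ≤ 3 * r i + 3 * (if r i = 1 then r i else 0) := by
    have : 0 < r i := hf i
    split_ifs <;> omega
  calc 6 * Fintype.card ι + #{p ∈ T | 3 ≤ r (f p)}
      = ∑ i, (6 + if 3 ≤ r i then r i else 0) := by
        rw [sum_add_distrib, sum_const, card_univ, smul_eq_mul, mul_comm, card_filter_fiber_card]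
    _ ≤ ∑ i, (3 * r i + 3 * if r i = 1 then r i else 0) := sum_le_sum fun i _ => key i
    _ = 3 * #T + 3 * #{p ∈ T | r (f p) = 1} := by
        rw [sum_add_distrib, ← mul_sum, ← mul_sum, ← card_eq_sum_fiber_card,
          card_filter_fiber_card T f (· = 1)]

end Fiber

section Rook

variable {α β : Type*} [DecidableEq α] [DecidableEq β]

def rowCard (T : Finset (α × β)) (i : α) : ℕ := #{p ∈ T | p.1 = i}

def colCard (T : Finset (α × β)) (j : β) : ℕ := #{p ∈ T | p.2 = j}

lemma ncard_inter_adj_add (T : Finset (α × β)) (v : α × β) :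
    ((T : Set (α × β)) ∩ {u | ((⊤ : SimpleGraph α) □ (⊤ : SimpleGraph β)).Adj v u}).ncard +
      (if v ∈ T then 2 else 0) = rowCard T v.1 + colCard T v.2 := by
  obtain ⟨i, j⟩ := v
  have hnbr : (T : Set (α × β)) ∩ {u | ((⊤ : SimpleGraph α) □ (⊤ : SimpleGraph β)).Adj (i, j) u} =
      ↑({p ∈ T | p.1 = i}.erase (i, j) ∪ {p ∈ T | p.2 = j}.erase (i, j)) := by
    ext ⟨a, b⟩
    simp only [Set.mem_inter_iff, mem_coe, Set.mem_ofPred_eq, boxProd_adj, top_adj, coe_union,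
      coe_erase, coe_filter, Set.mem_union, Set.mem_sdiff, Set.mem_singleton_iff, Prod.mk.injEq]
    tauto
  have hdisj : Disjoint ({p ∈ T | p.1 = i}.erase (i, j)) ({p ∈ T | p.2 = j}.erase (i, j)) := by
    rw [Finset.disjoint_left]
    rintro ⟨a, b⟩ h1 h2
    simp only [mem_erase, mem_filter, ne_eq, Prod.mk.injEq] at h1 h2
    exact h1.1 ⟨h1.2.2, h2.2.2⟩
  rw [hnbr, Set.ncard_coe_finset, card_union_of_disjoint hdisj, rowCard, colCard]
  split_ifs with hv
  · rw [← card_erase_add_one (mem_filter.2 ⟨hv, rfl⟩ : (i, j) ∈ {p ∈ T | p.1 = i}),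
      ← card_erase_add_one (mem_filter.2 ⟨hv, rfl⟩ : (i, j) ∈ {p ∈ T | p.2 = j})]
    ring
  · rw [erase_eq_of_notMem fun h => hv (mem_filter.1 h).1,
      erase_eq_of_notMem fun h => hv (mem_filter.1 h).1]
    rfl

lemma totalTwoDom_boxProd_top_iff (T : Finset (α × β)) :
    TotalTwoDom ((⊤ : SimpleGraph α) □ (⊤ : SimpleGraph β)) T ↔
      ∀ v, (if v ∈ T then 4 else 2) ≤ rowCard T v.1 + colCard T v.2 :=
  forall_congr' fun v => by
    have := ncard_inter_adj_add T v
    split_ifs at this ⊢ <;> omega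

end Rook

section LowerBound

variable {α : Type*} [DecidableEq α] [Fintype α]

lemma three_mul_card_le_of_pos {T : Finset (α × α)} (hrow : ∀ i, 0 < rowCard T i)
    (hcol : ∀ j, 0 < colCard T j) (hT : ∀ p ∈ T, 4 ≤ rowCard T p.1 + colCard T p.2) :
    3 * Fintype.card α ≤ 2 * #T ∧ (Fintype.card α % 4 = 2 → 3 * Fintype.card α + 2 ≤ 2 * #T) := by
  set A := {p ∈ T | rowCard T p.1 = 1}
  set B := {p ∈ T | colCard T p.2 = 1}
  have hAB : #A + #B ≤ #T := by
    rw [← card_union_of_disjoint (disjoint_filter.2 fun p hp h1 h2 => by have := hT p hp; omega)]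
    exact card_le_card (union_subset (filter_subset _ _) (filter_subset _ _))
  have hB : #B ≤ #{p ∈ T | 3 ≤ rowCard T p.1} :=
    card_le_card (monotone_filter_right _ fun p hp h => by have := hT p hp; omega)
  have hA : #A ≤ #{p ∈ T | 3 ≤ colCard T p.2} :=
    card_le_card (monotone_filter_right _ fun p hp h => by have := hT p hp; omega)
  have hrows := six_mul_card_add_card_filter_le T Prod.fst hrow
  have hcols := six_mul_card_add_card_filter_le T Prod.snd hcol
  change 6 * _ + #{p ∈ T | 3 ≤ rowCard T p.1} ≤ 3 * #T + 3 * #A at hrows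
  change 6 * _ + #{p ∈ T | 3 ≤ colCard T p.2} ≤ 3 * #T + 3 * #B at hcols
  omega

theorem TotalTwoDom.three_mul_card_le {T : Finset (α × α)}
    (hT : TotalTwoDom ((⊤ : SimpleGraph α) □ (⊤ : SimpleGraph α)) T) :
    3 * Fintype.card α ≤ 2 * #T ∧ (Fintype.card α % 4 = 2 → 3 * Fintype.card α + 2 ≤ 2 * #T) := by
  rw [totalTwoDom_boxProd_top_iff] at hT
  have h2 (i j : α) : 2 ≤ rowCard T i + colCard T j :=
    le_trans (by split_ifs <;> omega) (hT (i, j))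
  by_cases hrow : ∀ i, 0 < rowCard T i
  · by_cases hcol : ∀ j, 0 < colCard T j
    · exact three_mul_card_le_of_pos hrow hcol fun p hp => by simpa [hp] using hT p
    · obtain ⟨j, hj⟩ := not_forall.1 hcol
      have := two_mul_card_le_card_of_two_le T Prod.fst fun i =>
        show 2 ≤ rowCard T i by have := h2 i j; omega
      omega
  · obtain ⟨i, hi⟩ := not_forall.1 hrow
    have := two_mul_card_le_card_of_two_le T Prod.snd fun j =>
      show 2 ≤ colCard T j by have := h2 i j; omega
    omega

end LowerBound

section Pattern

variable {α β α' β' : Type*} [DecidableEq α] [DecidableEq β] [DecidableEq α'] [DecidableEq β']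

/-- A total 2-dominating set of the rook graph that meets every line. Unlike total
2-domination itself, this property is preserved by block-diagonal sums. -/
structure IsRookPattern (T : Finset (α × β)) : Prop where
  rowCard_pos : ∀ i, 0 < rowCard T i
  colCard_pos : ∀ j, 0 < colCard T j
  four_le : ∀ p ∈ T, 4 ≤ rowCard T p.1 + colCard T p.2

lemma IsRookPattern.totalTwoDom {T : Finset (α × β)} (hT : IsRookPattern T) :
    TotalTwoDom ((⊤ : SimpleGraph α) □ (⊤ : SimpleGraph β)) T := by
  rw [totalTwoDom_boxProd_top_iff]
  intro v
  split_ifs with hv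
  · exact hT.four_le v hv
  · have := hT.rowCard_pos v.1
    have := hT.colCard_pos v.2
    omega

def blockSum (T : Finset (α × β)) (T' : Finset (α' × β')) : Finset ((α ⊕ α') × (β ⊕ β')) :=
  T.map (.prodMap .inl .inl) ∪ T'.map (.prodMap .inr .inr)

variable (T : Finset (α × β)) (T' : Finset (α' × β'))

@[simp] lemma rowCard_blockSum_inl (i : α) :
    rowCard (blockSum T T') (.inl i) = rowCard T i := by
  simp [rowCard, blockSum, filter_union, filter_map, Function.comp_def]

@[simp] lemma rowCard_blockSum_inr (i : α') :
    rowCard (blockSum T T') (.inr i) = rowCard T' i := by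
  simp [rowCard, blockSum, filter_union, filter_map, Function.comp_def]

@[simp] lemma colCard_blockSum_inl (j : β) :
    colCard (blockSum T T') (.inl j) = colCard T j := by
  simp [colCard, blockSum, filter_union, filter_map, Function.comp_def]

@[simp] lemma colCard_blockSum_inr (j : β') :
    colCard (blockSum T T') (.inr j) = colCard T' j := by
  simp [colCard, blockSum, filter_union, filter_map, Function.comp_def]

lemma card_blockSum : #(blockSum T T') = #T + #T' := by
  rw [blockSum, card_union_of_disjoint, card_map, card_map]
  simp [Finset.disjoint_left]

variable {T T'}

lemma IsRookPattern.blockSum (hT : IsRookPattern T) (hT' : IsRookPattern T') :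
    IsRookPattern (blockSum T T') where
  rowCard_pos := by rintro (i | i) <;> simp [hT.rowCard_pos, hT'.rowCard_pos]
  colCard_pos := by rintro (j | j) <;> simp [hT.colCard_pos, hT'.colCard_pos]
  four_le := by
    intro q hq
    rw [_root_.blockSum, mem_union, mem_map, mem_map] at hq
    rcases hq with ⟨p, hp, rfl⟩ | ⟨p, hp, rfl⟩
    · simpa using hT.four_le p hp
    · simpa using hT'.four_le p hp

lemma IsRookPattern.map_prodCongr (hT : IsRookPattern T) (e : α ≃ α') (f : β ≃ β') :
    IsRookPattern (T.map (e.prodCongr f).toEmbedding) := by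
  have hrow (i : α) : rowCard (T.map (e.prodCongr f).toEmbedding) (e i) = rowCard T i := by
    simp [rowCard, filter_map]
  have hcol (j : β) : colCard (T.map (e.prodCongr f).toEmbedding) (f j) = colCard T j := by
    simp [colCard, filter_map]
  refine ⟨e.forall_congr_right.1 fun i => ?_, f.forall_congr_right.1 fun j => ?_, ?_⟩
  · rw [hrow]; exact hT.rowCard_pos i
  · rw [hcol]; exact hT.colCard_pos j
  · simp only [mem_map, Equiv.coe_toEmbedding]
    rintro _ ⟨p, hp, rfl⟩
    simpa [hrow, hcol] using hT.four_le p hp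

end Pattern

def starPattern (k : ℕ) : Finset (Fin (k + 1) × Fin (k + 1)) := {p | (p.1 = 0) ≠ (p.2 = 0)}

lemma isRookPattern_starPattern_three : IsRookPattern (starPattern 3) :=
  ⟨by decide, by decide, by decide⟩

theorem exists_isRookPattern (n : ℕ) (hn : 2 ≤ n) :
    ∃ T : Finset (Fin n × Fin n), IsRookPattern T ∧
      2 * #T ≤ 3 * n + 2 ∧ (n % 4 ≠ 2 → 2 * #T ≤ 3 * n + 1) := by
  induction n using Nat.strong_induction_on with
  | _ n ih =>
  by_cases hsmall : n ≤ 5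
  · interval_cases n
    · exact ⟨univ, ⟨by decide, by decide, by decide⟩, by decide, by decide⟩
    · exact ⟨({p | p.1 = 0 ∨ p.2 = 0} : Finset (Fin 3 × Fin 3)),
        ⟨by decide, by decide, by decide⟩, by decide, by decide⟩
    · exact ⟨starPattern 3, isRookPattern_starPattern_three, by decide, by decide⟩
    · exact ⟨starPattern 4, ⟨by decide, by decide, by decide⟩, by decide, by decide⟩
  · obtain ⟨m, rfl⟩ : ∃ m, n = m + 4 := ⟨n - 4, by omega⟩
    obtain ⟨T, hT, hcard, hcard'⟩ := ih m (by omega) (by omega)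
    refine ⟨(blockSum T (starPattern 3)).map (finSumFinEquiv.prodCongr finSumFinEquiv).toEmbedding,
      (hT.blockSum isRookPattern_starPattern_three).map_prodCongr _ _, ?_⟩
    have : #(starPattern 3) = 6 := by decide
    rw [card_map, card_blockSum, this]
    omega

theorem stmt_14 (n : ℕ) (hn : 2 ≤ n) :
    (n % 4 = 0 → 2 * gamma2t (K n □ K n) = 3 * n) ∧
    (n % 2 = 1 → 2 * gamma2t (K n □ K n) = 3 * n + 1) ∧
    (n % 4 = 2 → 2 * gamma2t (K n □ K n) = 3 * n + 2) := by
  obtain ⟨T, hT, hcard, hcard'⟩ := exists_isRookPattern n hn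
  have hdom : TotalTwoDom (K n □ K n) T := hT.totalTwoDom
  obtain ⟨S, hS, hSγ⟩ := exists_totalTwoDom_ncard_eq_gamma2t ⟨_, hdom⟩
  obtain ⟨T₀, rfl⟩ := S.toFinite.exists_finset_coe
  have hlow := TotalTwoDom.three_mul_card_le hS
  have hup := gamma2t_le hdom
  rw [Set.ncard_coe_finset] at hup hSγ
  rw [Fintype.card_fin] at hlow
  omega
end
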